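/- arXiv:2310.13131 — 2 statements merged into one kernel-verified Lean document; each statement's English description precedes it below -/
import Mathlib

section
/- Let Γ = γ¹ ∪ … ∪ γ^q be a germ of reduced singular curve at 0 ∈ ℂ². Then μ_D(Γ) ≥ μ_T(Γ) ≥ max(μ(γ¹), …, μ(γ^q)). Moreover, if Γ is irreducible (q = 1) then μ_T(Γ) = μ_D(Γ) = μ(Γ). -/
/-!
Statement 6 (Fortuny Ayuso–Ribón, "The Poincaré problem for reducible curves").

Let `Γ = γ¹ ∪ … ∪ γ^q` be a germ of reduced singular curve at `0 ∈ ℂ²`.  Then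
`μ_D(Γ) ≥ μ_T(Γ) ≥ max(μ(γ¹), …, μ(γ^q))`, and if `Γ` is irreducible then
`μ_T(Γ) = μ_D(Γ) = μ(Γ)`.

We identify a germ of curve with the Puiseux parametrizations
`t ↦ (t^(n j), c j (t))` of its branches.  Following the paper, the terminal
and divisorial virtual multiplicities `μ_T`, `μ_D` are computed through the set
`𝔠` of Puiseux roots of `τ⁻¹(Γ)` (where `τ(x,y) = (xⁿ,y)`, `n = lcm nⱼ`):
an `l`-jet `σ` is *terminal* if its fiber in `𝔠` has at least two elements and
the `(l+1)`-jet map is injective on it, and *divisorial* if the fiber has at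
least two elements and some element of the fiber is separated from all the
others by its `(l+1)`-jet; `μ_T(Γ)` (resp. `μ_D(Γ)`) is the number of terminal
(resp. divisorial) jets.  The virtual multiplicity `μ(γ)` of a branch of
multiplicity `n` is `n / e` where `e` is the smallest value `> 1` of the gcd
chain `l ↦ gcd(n, {exponents ≤ l in the support of c})`, and `μ(γ) = 1` if the
chain never takes a value `> 1` (i.e. `μ(γ) = q_{g-1}`, the denominator of the
last-but-one Puiseux characteristic exponent).
-/

open scoped Classical

namespace PoincareRed

/-- The gcd chain of a branch `t ↦ (tⁿ, c(t))`: gcd of `n` and of the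
exponents `≤ l` appearing in `c`. -/
noncomputable def gcdChain (n : ℕ) (c : PowerSeries ℂ) (l : ℕ) : ℕ :=
  Nat.gcd n (((Finset.range (l + 1)).filter fun k => PowerSeries.coeff (R := ℂ) k c ≠ 0).gcd id)

/-- The Puiseux root `c(ζ^l t^(N/n))` of a branch `t ↦ (tⁿ, c(t))`, where
`ζ = exp(2πi/n)` and `N` is the global ramification order. -/
noncomputable def rootSeries (N n : ℕ) (c : PowerSeries ℂ) (l : ℕ) : PowerSeries ℂ :=
  PowerSeries.mk fun m =>
    if (N / n) ∣ m then
      Complex.exp (2 * (Real.pi : ℂ) * Complex.I * (l : ℂ) / (n : ℂ)) ^ (m / (N / n)) *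
        PowerSeries.coeff (R := ℂ) (m / (N / n)) c
    else 0

/-- A germ of reduced curve at `0 ∈ ℂ²`, given by the Puiseux parametrizations
`t ↦ (t^(n j), c j (t))` of its branches `γ^j`, `j : Fin q`; the coordinates
are chosen so that `x = 0` is not tangent to any branch. -/
structure CurveGermData (q : ℕ) where
  /-- there is at least one branch -/
  hq : 1 ≤ q
  /-- the multiplicity `ν₀(γ^j)` of the branch `γ^j` -/
  n : Fin q → ℕ
  /-- the Puiseux series of the branch: `γ^j` is parametrized by `t ↦ (t^(n j), c j (t))` -/
  c : Fin q → PowerSeries ℂ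
  n_pos : ∀ j, 1 ≤ n j
  /-- `x = 0` is not tangent to `γ^j` (so `ν₀(γ^j) = n j`): `ord (c j) ≥ n j` -/
  not_tangent : ∀ j, ∀ m < n j, PowerSeries.coeff (R := ℂ) m (c j) = 0
  /-- each parametrization is primitive (the branch is irreducible and the
  parametrization is injective): the gcd chain eventually reaches `1` -/
  primitive : ∀ j, ∃ l, gcdChain (n j) (c j) l = 1
  /-- the branches are pairwise distinct (`Γ` is reduced) -/
  distinct : ∀ j j', j ≠ j' → ∀ l l',
    rootSeries (Finset.univ.lcm n) (n j) (c j) l ≠ rootSeries (Finset.univ.lcm n) (n j') (c j') l'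

namespace CurveGermData

variable {q : ℕ} (Γ : CurveGermData q)

/-- `n = lcm(n₁, …, n_q)`, the ramification order of `τ(x,y) = (xⁿ, y)`. -/
noncomputable def N : ℕ := Finset.univ.lcm Γ.n

/-- the multiplicity `ν₀(Γ) = n₁ + ⋯ + n_q` of `Γ` at the origin -/
noncomputable def mult : ℕ := ∑ j, Γ.n j

/-- `Γ` is singular at the origin -/
def Singular : Prop := 2 ≤ Γ.mult

/-- the set `𝔠` of Puiseux roots of the branches of `τ⁻¹(Γ)` -/
noncomputable def roots : Set (PowerSeries ℂ) :=
  {s | ∃ j : Fin q, ∃ l < Γ.n j, s = rootSeries Γ.N (Γ.n j) (Γ.c j) l}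

/-- the fiber over the `l`-jet `σ` of the jet map `j_l : 𝔠 → J^l` -/
noncomputable def jetFiber (l : ℕ) (σ : Polynomial ℂ) : Set (PowerSeries ℂ) :=
  {s | s ∈ Γ.roots ∧ PowerSeries.trunc (l + 1) s = σ}

/-- an `l`-jet `σ` is terminal if `j_l⁻¹(σ)` has at least two elements and
`j_{l+1}` is injective on `j_l⁻¹(σ)` -/
def IsTerminalJet (l : ℕ) (σ : Polynomial ℂ) : Prop :=
  2 ≤ (Γ.jetFiber l σ).ncard ∧ Set.InjOn (PowerSeries.trunc (l + 2)) (Γ.jetFiber l σ)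

/-- an `l`-jet `σ` is divisorial if `j_l⁻¹(σ)` has at least two elements and
some `σ' ∈ j_{l+1}(j_l⁻¹(σ))` has exactly one preimage in `j_l⁻¹(σ)` -/
def IsDivisorialJet (l : ℕ) (σ : Polynomial ℂ) : Prop :=
  2 ≤ (Γ.jetFiber l σ).ncard ∧
    ∃ s ∈ Γ.jetFiber l σ, ∀ s' ∈ Γ.jetFiber l σ,
      PowerSeries.trunc (l + 2) s' = PowerSeries.trunc (l + 2) s → s' = s

/-- the terminal virtual multiplicity `μ_T(Γ)`: the number of terminal jets,
i.e. the number of terminal (self-intersection `−1`) components of the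
exceptional divisor of the minimal resolution of `τ⁻¹(Γ)` -/
noncomputable def muT : ℕ := Set.ncard {p : ℕ × Polynomial ℂ | Γ.IsTerminalJet p.1 p.2}

/-- the divisorial virtual multiplicity `μ_D(Γ)`: the number of divisorial
jets, i.e. the number of components of the exceptional divisor of the minimal
resolution of `τ⁻¹(Γ)` meeting the strict transform of `τ⁻¹(Γ)` -/
noncomputable def muD : ℕ := Set.ncard {p : ℕ × Polynomial ℂ | Γ.IsDivisorialJet p.1 p.2}

/-- the virtual multiplicity `μ(γ^j) = q_{g−1}` of the branch `γ^j`
(the denominator of the last-but-one Puiseux characteristic exponent):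
`μ(γ^j) = n j / e_{g−1}` where `e_{g−1}` is the smallest value `> 1` of the
gcd chain, and `μ(γ^j) = 1` for a smooth branch. -/
noncomputable def muBranch (j : Fin q) : ℕ :=
  if h : {e : ℕ | 1 < e ∧ ∃ l, gcdChain (Γ.n j) (Γ.c j) l = e}.Nonempty then
    Γ.n j / sInf {e : ℕ | 1 < e ∧ ∃ l, gcdChain (Γ.n j) (Γ.c j) l = e}
  else 1

end CurveGermData

/-!
Everything is read off the jets of the Puiseux roots. For a branch `t ↦ (tⁿ, c(t))` and
`M = N / n`, the roots `a` and `b` have the same `(l+1)`-jet iff `a ≡ b` modulo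
`n / gcdChain n c (l / M)`. Let `Λ` be the last level at which the gcd chain is not `1` and
`e = gcdChain n c Λ ≥ 2`, so that `μ(γ) = n / e`. At level `M Λ` the roots of `γ` fall into
`n / e` jet classes of `e` roots each. Inside each class, going up to the last level at which a
sub-fiber still has two elements produces a terminal jet, and disjoint classes produce distinct
ones; hence `μ(γ) ≤ μ_T`. Terminal jets are divisorial, so `μ_T ≤ μ_D`. For an irreducible curve
every divisorial jet lies at level `Λ`: at higher levels fibers are singletons, and below `Λ` each
root has a twin, shifted by `n / gcdChain`, with the same next jet. Hence `μ_D ≤ n / e`.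
-/

open PowerSeries

section Truncation

variable {R : Type*} [CommSemiring R]

lemma trunc_eq_trunc_iff {f g : PowerSeries R} {k : ℕ} :
    trunc k f = trunc k g ↔ ∀ m < k, coeff m f = coeff m g := by
  simp only [Polynomial.ext_iff, coeff_trunc]
  refine ⟨fun h m hm => by simpa [hm] using h m, fun h m => ?_⟩
  split_ifs with hm
  exacts [h m hm, rfl]

lemma trunc_eq_trunc_of_le {f g : PowerSeries R} {k k' : ℕ} (hk : k ≤ k')
    (h : trunc k' f = trunc k' g) : trunc k f = trunc k g := by
  rw [← trunc_trunc_of_le f hk, h, trunc_trunc_of_le g hk]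

lemma exists_injOn_trunc {S : Set (PowerSeries R)} (hS : S.Finite) :
    ∃ L, ∀ l, L ≤ l → S.InjOn (trunc l) := by
  have hsep (p : S × S) : ∃ d, p.1 ≠ p.2 → coeff d (p.1 : PowerSeries R) ≠ coeff d p.2 := by
    by_contra! h
    obtain ⟨hne, -⟩ := h 0
    exact hne (Subtype.ext (PowerSeries.ext fun d => (h d).2))
  choose d hd using hsep
  have : Finite S := hS.to_subtype
  obtain ⟨L, hL⟩ := (Set.finite_range d).bddAbove
  refine ⟨L + 1, fun l hl s hs s' hs' heq => ?_⟩
  by_contra hne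
  refine hd ⟨⟨s, hs⟩, ⟨s', hs'⟩⟩ (fun h => hne (congrArg Subtype.val h)) ?_
  exact trunc_eq_trunc_iff.1 heq _ (by have := hL (Set.mem_range_self (⟨s, hs⟩, ⟨s', hs'⟩)); omega)

end Truncation

lemma modEq_mul_gcd {n a b c d : ℕ} (hc : a * c ≡ b * c [MOD n]) (hd : a * d ≡ b * d [MOD n]) :
    a * Nat.gcd c d ≡ b * Nat.gcd c d [MOD n] := by
  rw [Nat.modEq_iff_dvd] at *
  have hbezout : ((b * Nat.gcd c d : ℕ) : ℤ) - (a * Nat.gcd c d : ℕ) =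
      Nat.gcdA c d * ((b * c : ℕ) - (a * c : ℕ)) + Nat.gcdB c d * ((b * d : ℕ) - (a * d : ℕ)) := by
    push_cast
    rw [Nat.gcd_eq_gcd_ab]
    ring
  rw [hbezout]
  exact hc.linear_comb hd _ _

lemma forall_mul_modEq_iff {n : ℕ} (hn : 0 < n) (a b : ℕ) (S : Finset ℕ) :
    (∀ k ∈ S, a * k ≡ b * k [MOD n]) ↔ a ≡ b [MOD n / Nat.gcd n (S.gcd id)] := by
  set g := Nat.gcd n (S.gcd id)
  constructor
  · intro h
    have hag : a * g ≡ b * g [MOD n] := by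
      induction S using Finset.induction_on with
      | empty => simp [g, Nat.ModEq, Nat.mul_mod_left]
      | insert k S hk ih =>
        simp only [g, Finset.gcd_insert, id, GCDMonoid.gcd, Nat.gcd_left_comm n k]
        exact modEq_mul_gcd (h k (Finset.mem_insert_self k S))
          (ih fun k' hk' => h k' (Finset.mem_insert_of_mem hk'))
    have hgn : g ∣ n := Nat.gcd_dvd_left _ _
    simpa only [Nat.gcd_eq_right hgn] using Nat.ModEq.cancel_right_div_gcd hn hag
  · intro h k hk
    obtain ⟨t, rfl⟩ : g ∣ k := (Nat.gcd_dvd_right _ _).trans (Finset.gcd_dvd hk)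
    have := (h.mul_right' g).mul_right t
    rw [Nat.div_mul_cancel (Nat.gcd_dvd_left _ _)] at this
    simpa only [mul_assoc] using this

section RootSeries

lemma coeff_rootSeries (N n : ℕ) (c : PowerSeries ℂ) (a m : ℕ) :
    coeff m (rootSeries N n c a) =
      if N / n ∣ m then
        Complex.exp (2 * Real.pi * Complex.I / n) ^ (a * (m / (N / n))) * coeff (m / (N / n)) c
      else 0 := by
  have hζ : Complex.exp (2 * Real.pi * Complex.I * a / n) =
      Complex.exp (2 * Real.pi * Complex.I / n) ^ a := by
    rw [← Complex.exp_nat_mul]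
    ring_nf
  rw [rootSeries, coeff_mk, hζ, pow_mul]

variable {N n : ℕ} (c : PowerSeries ℂ)

lemma trunc_rootSeries_eq_iff (hM : 0 < N / n) (a b l : ℕ) :
    trunc (l + 1) (rootSeries N n c a) = trunc (l + 1) (rootSeries N n c b) ↔
      a ≡ b [MOD n / gcdChain n c (l / (N / n))] := by
  have hn : n ≠ 0 := (Nat.div_pos_iff.1 hM).1.ne'
  have hζ := Complex.isPrimitiveRoot_exp n hn
  have hpow (k : ℕ) : Complex.exp (2 * Real.pi * Complex.I / n) ^ (a * k) =
      Complex.exp (2 * Real.pi * Complex.I / n) ^ (b * k) ↔ a * k ≡ b * k [MOD n] := by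
    rw [(hζ.isOfFinOrder hn).pow_eq_pow_iff_modEq, ← hζ.eq_orderOf]
  rw [trunc_eq_trunc_iff, gcdChain, ← forall_mul_modEq_iff (Nat.pos_of_ne_zero hn)]
  simp only [Finset.mem_filter, Finset.mem_range, Nat.lt_succ_iff]
  constructor
  · rintro h k ⟨hk, hck⟩
    have hkl : N / n * k ≤ l := Nat.mul_comm k _ ▸ (Nat.le_div_iff_mul_le hM).1 hk
    have h' := h _ hkl
    simp only [coeff_rootSeries, dvd_mul_right, if_true, Nat.mul_div_cancel_left k hM] at h'
    exact (hpow k).1 (mul_right_cancel₀ hck h')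
  · intro h m hm
    rw [coeff_rootSeries, coeff_rootSeries]
    split_ifs
    · by_cases hck : coeff (m / (N / n)) c = 0
      · simp [hck]
      · rw [(hpow _).2 (h _ ⟨Nat.div_le_div_right hm, hck⟩)]
    · rfl

end RootSeries

lemma ncard_image_Iio_of_eq_iff_modEq {α : Type*} {f : ℕ → α} {m n : ℕ} (hm : 0 < m)
    (hmn : m ≤ n) (hf : ∀ a b, f a = f b ↔ a ≡ b [MOD m]) : (f '' Set.Iio n).ncard = m := by
  have himage : f '' Set.Iio n = f '' Set.Iio m := by
    refine (Set.image_mono (Set.Iio_subset_Iio hmn)).antisymm' ?_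
    rintro _ ⟨a, -, rfl⟩
    exact ⟨a % m, Nat.mod_lt a hm, (hf _ _).2 (Nat.mod_modEq a m)⟩
  have hinj : (Set.Iio m).InjOn f := fun a ha b hb h => ((hf a b).1 h).eq_of_lt_of_lt ha hb
  rw [himage, hinj.ncard_image, ← Finset.coe_range, Set.ncard_coe_finset, Finset.card_range]

section Branch

variable {N n : ℕ} {c : PowerSeries ℂ}

lemma gcdChain_dvd_self (n : ℕ) (c : PowerSeries ℂ) (l : ℕ) : gcdChain n c l ∣ n :=
  Nat.gcd_dvd_left _ _

lemma gcdChain_pos (hn : 0 < n) (l : ℕ) : 0 < gcdChain n c l :=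
  Nat.gcd_pos_of_pos_left _ hn

lemma gcdChain_dvd_gcdChain {l l' : ℕ} (h : l ≤ l') : gcdChain n c l' ∣ gcdChain n c l := by
  refine Nat.dvd_gcd (Nat.gcd_dvd_left _ _) (Finset.dvd_gcd fun k hk => ?_)
  refine (Nat.gcd_dvd_right _ _).trans (Finset.gcd_dvd ?_)
  simp only [Finset.mem_filter, Finset.mem_range] at hk ⊢
  exact ⟨by omega, hk.2⟩

lemma gcdChain_zero (h0 : coeff 0 c = 0) : gcdChain n c 0 = n := by
  simp [gcdChain, Finset.range_one, Finset.filter_singleton, h0]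

lemma exists_last_gcdChain_ne_one (hn : 2 ≤ n) (h0 : coeff 0 c = 0)
    (hprim : ∃ l, gcdChain n c l = 1) :
    ∃ Λ, gcdChain n c Λ ≠ 1 ∧ ∀ l, gcdChain n c l ≠ 1 → l ≤ Λ := by
  obtain ⟨L, hL⟩ := hprim
  have hbound (l : ℕ) (hl : gcdChain n c l ≠ 1) : l ≤ L := by
    by_contra! hLl
    exact hl (Nat.eq_one_of_dvd_one (hL ▸ gcdChain_dvd_gcdChain hLl.le))
  have h0' : gcdChain n c 0 ≠ 1 := by rw [gcdChain_zero h0]; omega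
  let P (l : ℕ) : Prop := gcdChain n c l ≠ 1
  exact ⟨Nat.findGreatest P L, Nat.findGreatest_spec (P := P) L.zero_le h0',
    fun l hl => Nat.le_findGreatest (hbound l hl) hl⟩

variable (hM : 0 < N / n)
include hM

lemma modEq_of_rootSeries_eq (hprim : ∃ l, gcdChain n c l = 1) {a b : ℕ}
    (h : rootSeries N n c a = rootSeries N n c b) : a ≡ b [MOD n] := by
  obtain ⟨l, hl⟩ := hprim
  have := (trunc_rootSeries_eq_iff c hM a b (N / n * l)).1 (by rw [h])
  rwa [Nat.mul_div_cancel_left l hM, hl, Nat.div_one] at this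

lemma gcdChain_ne_one_of_trunc_rootSeries_eq {a b l : ℕ} (ha : a < n) (hb : b < n) (hab : a ≠ b)
    (h : trunc (l + 1) (rootSeries N n c a) = trunc (l + 1) (rootSeries N n c b)) :
    gcdChain n c (l / (N / n)) ≠ 1 := by
  intro h1
  rw [trunc_rootSeries_eq_iff c hM, h1, Nat.div_one] at h
  exact hab (h.eq_of_lt_of_lt ha hb)

lemma exists_rootSeries_ne_trunc_eq (hprim : ∃ l, gcdChain n c l = 1) {b l : ℕ} (hb : b < n)
    (hg : gcdChain n c (l / (N / n)) ≠ 1) :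
    ∃ b' < n, rootSeries N n c b' ≠ rootSeries N n c b ∧
      trunc (l + 1) (rootSeries N n c b') = trunc (l + 1) (rootSeries N n c b) := by
  have hn : 0 < n := by omega
  set g := gcdChain n c (l / (N / n))
  have hgn : g ∣ n := gcdChain_dvd_self n c _
  have hg2 : 2 ≤ g := by have := gcdChain_pos (c := c) hn (l / (N / n)); omega
  have hmn : n / g ∣ n := Nat.div_dvd_of_dvd hgn
  have hm0 : 0 < n / g := Nat.div_pos (Nat.le_of_dvd hn hgn) (by omega)
  have hmlt : n / g < n := Nat.div_lt_self hn (by omega)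
  have hshift : (b + n / g) % n ≡ b + n / g [MOD n] := Nat.mod_modEq _ _
  refine ⟨(b + n / g) % n, Nat.mod_lt _ hn, fun h => ?_, ?_⟩
  · have h' : b + n / g ≡ b + 0 [MOD n] := hshift.symm.trans (modEq_of_rootSeries_eq hM hprim h)
    have := Nat.le_of_dvd hm0 (Nat.modEq_zero_iff_dvd.1 (h'.add_left_cancel' b))
    omega
  · rw [trunc_rootSeries_eq_iff c hM]
    exact (hshift.of_dvd hmn).trans Nat.add_modEq_right

lemma ncard_image_trunc_rootSeries (l : ℕ) :
    ((fun a => trunc (l + 1) (rootSeries N n c a)) '' Set.Iio n).ncard =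
      n / gcdChain n c (l / (N / n)) := by
  have hn : 0 < n := (Nat.div_pos_iff.1 hM).1
  have hgn := gcdChain_dvd_self n c (l / (N / n))
  exact ncard_image_Iio_of_eq_iff_modEq
    (Nat.div_pos (Nat.le_of_dvd hn hgn) (gcdChain_pos hn _)) (Nat.div_le_self _ _)
    fun a b => trunc_rootSeries_eq_iff c hM a b l

end Branch

namespace CurveGermData

variable {q : ℕ} (Γ : CurveGermData q)

lemma N_div_n_pos (j : Fin q) : 0 < Γ.N / Γ.n j := by
  have hN : Γ.N ≠ 0 := by
    rw [N, Ne, Finset.lcm_eq_zero_iff]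
    rintro ⟨j', -, hj'⟩
    exact absurd (Γ.n_pos j') (by omega)
  exact Nat.div_pos (Nat.le_of_dvd (Nat.pos_of_ne_zero hN) (Finset.dvd_lcm (Finset.mem_univ j)))
    (Γ.n_pos j)

lemma root_mem_roots (j : Fin q) {a : ℕ} (ha : a < Γ.n j) :
    rootSeries Γ.N (Γ.n j) (Γ.c j) a ∈ Γ.roots :=
  ⟨j, a, ha, rfl⟩

lemma rootSeries_eq_rootSeries_iff {j j' : Fin q} {a a' : ℕ} (ha : a < Γ.n j) (ha' : a' < Γ.n j') :
    rootSeries Γ.N (Γ.n j) (Γ.c j) a = rootSeries Γ.N (Γ.n j') (Γ.c j') a' ↔ j = j' ∧ a = a' := by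
  refine ⟨fun h => ?_, by rintro ⟨rfl, rfl⟩; rfl⟩
  by_cases hjj : j = j'
  · subst hjj
    exact ⟨rfl, (modEq_of_rootSeries_eq (Γ.N_div_n_pos j) (Γ.primitive j) h).eq_of_lt_of_lt ha ha'⟩
  · exact absurd h (Γ.distinct j j' hjj a a')

lemma roots_eq_image : Γ.roots = ↑((Finset.univ.sigma fun j => Finset.range (Γ.n j)).image
    fun p => rootSeries Γ.N (Γ.n p.1) (Γ.c p.1) p.2) := by
  ext s
  simp [roots, eq_comm]

lemma roots_finite : Γ.roots.Finite := by
  rw [roots_eq_image]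
  exact Finset.finite_toSet _

lemma ncard_roots : Γ.roots.ncard = Γ.mult := by
  have hinj : Set.InjOn (fun p : (_ : Fin q) × ℕ => rootSeries Γ.N (Γ.n p.1) (Γ.c p.1) p.2)
      ↑(Finset.univ.sigma fun j => Finset.range (Γ.n j)) := by
    rintro ⟨j, a⟩ hp ⟨j', a'⟩ hp' h
    simp only [Finset.coe_sigma, Set.mem_sigma_iff, Finset.coe_range, Set.mem_Iio] at hp hp'
    obtain ⟨rfl, rfl⟩ := (Γ.rootSeries_eq_rootSeries_iff hp.2 hp'.2).1 h
    rfl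
  rw [roots_eq_image, Set.ncard_coe_finset, Finset.card_image_of_injOn hinj, Finset.card_sigma]
  simp [mult]

lemma jetFiber_finite (l : ℕ) (σ : Polynomial ℂ) : (Γ.jetFiber l σ).Finite :=
  Γ.roots_finite.subset fun _ hs => hs.1

lemma two_le_ncard_jetFiber_iff {l : ℕ} {σ : Polynomial ℂ} :
    2 ≤ (Γ.jetFiber l σ).ncard ↔ ∃ s ∈ Γ.jetFiber l σ, ∃ s' ∈ Γ.jetFiber l σ, s ≠ s' :=
  Set.one_lt_ncard (Γ.jetFiber_finite l σ)

lemma exists_level_bound : ∃ L, ∀ l σ, 2 ≤ (Γ.jetFiber l σ).ncard → l < L := by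
  obtain ⟨L, hL⟩ := exists_injOn_trunc Γ.roots_finite
  refine ⟨L, fun l σ h2 => ?_⟩
  obtain ⟨s, hs, s', hs', hne⟩ := Γ.two_le_ncard_jetFiber_iff.1 h2
  by_contra! hl
  exact hne (hL (l + 1) (by omega) hs.1 hs'.1 (hs.2.trans hs'.2.symm))

lemma IsTerminalJet.isDivisorialJet {l : ℕ} {σ : Polynomial ℂ} (h : Γ.IsTerminalJet l σ) :
    Γ.IsDivisorialJet l σ := by
  obtain ⟨s, hs, -⟩ := Γ.two_le_ncard_jetFiber_iff.1 h.1
  exact ⟨h.1, s, hs, fun s' hs' he => h.2 hs' hs he⟩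

lemma divisorialJets_finite : {p : ℕ × Polynomial ℂ | Γ.IsDivisorialJet p.1 p.2}.Finite := by
  obtain ⟨L, hL⟩ := Γ.exists_level_bound
  refine ((Γ.roots_finite.prod (Set.finite_Iio L)).image
    fun x => (x.2, trunc (x.2 + 1) x.1)).subset ?_
  rintro ⟨l, σ⟩ ⟨h2, -⟩
  obtain ⟨s, hs, -⟩ := Γ.two_le_ncard_jetFiber_iff.1 h2
  exact ⟨(s, l), ⟨hs.1, hL l σ h2⟩, by simp [hs.2]⟩

lemma terminalJets_finite : {p : ℕ × Polynomial ℂ | Γ.IsTerminalJet p.1 p.2}.Finite :=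
  Γ.divisorialJets_finite.subset fun _ hp => hp.isDivisorialJet

lemma muT_le_muD : Γ.muT ≤ Γ.muD :=
  Set.ncard_le_ncard (fun _ hp => hp.isDivisorialJet) Γ.divisorialJets_finite

lemma exists_isTerminalJet_jetFiber_subset {l : ℕ} {σ : Polynomial ℂ}
    (h2 : 2 ≤ (Γ.jetFiber l σ).ncard) :
    ∃ p : ℕ × Polynomial ℂ, Γ.IsTerminalJet p.1 p.2 ∧ Γ.jetFiber p.1 p.2 ⊆ Γ.jetFiber l σ := by
  obtain ⟨L, hL⟩ := Γ.exists_level_bound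
  let P (k : ℕ) : Prop := ∃ τ, 2 ≤ (Γ.jetFiber k τ).ncard ∧ Γ.jetFiber k τ ⊆ Γ.jetFiber l σ
  obtain ⟨τ, hτ2, hτ⟩ : P (Nat.findGreatest P L) :=
    Nat.findGreatest_spec (hL l σ h2).le ⟨σ, h2, subset_rfl⟩
  set k := Nat.findGreatest P L
  refine ⟨(k, τ), ⟨hτ2, fun s hs s' hs' he => ?_⟩, hτ⟩
  by_contra hne
  have hsub : Γ.jetFiber (k + 1) (trunc (k + 2) s) ⊆ Γ.jetFiber k τ :=
    fun u hu => ⟨hu.1, (trunc_eq_trunc_of_le (by omega) hu.2).trans hs.2⟩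
  have hP : P (k + 1) := ⟨trunc (k + 2) s,
    Γ.two_le_ncard_jetFiber_iff.2 ⟨s, ⟨hs.1, rfl⟩, s', ⟨hs'.1, he.symm⟩, hne⟩, hsub.trans hτ⟩
  exact Nat.findGreatest_is_greatest (Nat.lt_succ_self k) (hL _ _ hP.choose_spec.1).le hP

lemma ncard_le_muT (l : ℕ) {J : Set (Polynomial ℂ)} (hJ : ∀ σ ∈ J, 2 ≤ (Γ.jetFiber l σ).ncard) :
    J.ncard ≤ Γ.muT := by
  choose! F hF hFsub using fun σ hσ => Γ.exists_isTerminalJet_jetFiber_subset (hJ σ hσ)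
  refine Set.ncard_le_ncard_of_injOn F hF (fun σ hσ σ' hσ' h => ?_) Γ.terminalJets_finite
  obtain ⟨s, hs, -⟩ := Γ.two_le_ncard_jetFiber_iff.1 (hF σ hσ).1
  exact (hFsub σ hσ hs).2.symm.trans (hFsub σ' hσ' (h ▸ hs)).2

lemma jetFiber_zero_zero : Γ.jetFiber 0 0 = Γ.roots := by
  refine Set.ext fun s => ⟨And.left, fun hs => ⟨hs, ?_⟩⟩
  obtain ⟨j, a, -, rfl⟩ := hs
  rw [trunc_one_left, coeff_rootSeries]
  simp [Γ.not_tangent j 0 (Γ.n_pos j)]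

lemma one_le_muT (hsing : Γ.Singular) : 1 ≤ Γ.muT := by
  have h2 : 2 ≤ (Γ.jetFiber 0 0).ncard := by rw [jetFiber_zero_zero, ncard_roots]; exact hsing
  simpa using Γ.ncard_le_muT 0 (J := {0}) (by simpa using h2)

lemma muBranch_eq_one {j : Fin q} (hj : Γ.n j = 1) : Γ.muBranch j = 1 := by
  rw [muBranch, dif_neg]
  rintro ⟨e, he, l, hl⟩
  rw [gcdChain, hj, Nat.gcd_one_left] at hl
  omega

lemma muBranch_eq_div {j : Fin q} {Λ : ℕ} (hΛ : gcdChain (Γ.n j) (Γ.c j) Λ ≠ 1)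
    (hlast : ∀ l, gcdChain (Γ.n j) (Γ.c j) l ≠ 1 → l ≤ Λ) :
    Γ.muBranch j = Γ.n j / gcdChain (Γ.n j) (Γ.c j) Λ := by
  have hpos (l : ℕ) := gcdChain_pos (c := Γ.c j) (Γ.n_pos j) l
  have hmem : gcdChain (Γ.n j) (Γ.c j) Λ ∈ {e | 1 < e ∧ ∃ l, gcdChain (Γ.n j) (Γ.c j) l = e} :=
    ⟨by have := hpos Λ; omega, Λ, rfl⟩
  rw [muBranch, dif_pos ⟨_, hmem⟩]
  congr 1
  refine le_antisymm (Nat.sInf_le hmem) (le_csInf ⟨_, hmem⟩ ?_)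
  rintro _ ⟨he, l, rfl⟩
  exact Nat.le_of_dvd (hpos l) (gcdChain_dvd_gcdChain (hlast l (by omega)))

lemma two_le_ncard_jetFiber_trunc_rootSeries (j : Fin q) {a l : ℕ} (ha : a < Γ.n j)
    (hg : gcdChain (Γ.n j) (Γ.c j) (l / (Γ.N / Γ.n j)) ≠ 1) :
    2 ≤ (Γ.jetFiber l (trunc (l + 1) (rootSeries Γ.N (Γ.n j) (Γ.c j) a))).ncard := by
  obtain ⟨a', ha', hne, htrunc⟩ :=
    exists_rootSeries_ne_trunc_eq (Γ.N_div_n_pos j) (Γ.primitive j) ha hg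
  exact Γ.two_le_ncard_jetFiber_iff.2
    ⟨_, ⟨Γ.root_mem_roots j ha', htrunc⟩, _, ⟨Γ.root_mem_roots j ha, rfl⟩, hne⟩

lemma muBranch_le_muT (hsing : Γ.Singular) (j : Fin q) : Γ.muBranch j ≤ Γ.muT := by
  by_cases hj : Γ.n j = 1
  · rw [Γ.muBranch_eq_one hj]
    exact Γ.one_le_muT hsing
  obtain ⟨Λ, hΛ, hlast⟩ := exists_last_gcdChain_ne_one (by have := Γ.n_pos j; omega)
    (Γ.not_tangent j 0 (Γ.n_pos j)) (Γ.primitive j)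
  have hM := Γ.N_div_n_pos j
  have hlevel : Γ.N / Γ.n j * Λ / (Γ.N / Γ.n j) = Λ := Nat.mul_div_cancel_left Λ hM
  rw [Γ.muBranch_eq_div hΛ hlast, ← hlevel, ← ncard_image_trunc_rootSeries hM]
  refine Γ.ncard_le_muT (Γ.N / Γ.n j * Λ) ?_
  rintro _ ⟨a, ha, rfl⟩
  exact Γ.two_le_ncard_jetFiber_trunc_rootSeries j ha (by rwa [hlevel])

end CurveGermData

namespace CurveGermData

variable (Γ : CurveGermData 1)

lemma N_div_n_zero : Γ.N / Γ.n 0 = 1 := by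
  simp [N, Finset.univ_unique, Fin.default_eq_zero, Nat.div_self (Γ.n_pos 0)]

lemma exists_eq_rootSeries_of_mem_roots {s : PowerSeries ℂ} (hs : s ∈ Γ.roots) :
    ∃ b < Γ.n 0, s = rootSeries Γ.N (Γ.n 0) (Γ.c 0) b := by
  obtain ⟨j, b, hb, rfl⟩ := hs
  obtain rfl := Subsingleton.elim j 0
  exact ⟨b, hb, rfl⟩

lemma isDivisorialJet_level {Λ : ℕ} (hΛ : gcdChain (Γ.n 0) (Γ.c 0) Λ ≠ 1)
    (hlast : ∀ l, gcdChain (Γ.n 0) (Γ.c 0) l ≠ 1 → l ≤ Λ) {l : ℕ} {σ : Polynomial ℂ}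
    (h : Γ.IsDivisorialJet l σ) :
    l = Λ ∧ σ ∈ (fun b => trunc (Λ + 1) (rootSeries Γ.N (Γ.n 0) (Γ.c 0) b)) '' Set.Iio (Γ.n 0) := by
  obtain ⟨h2, s, hs, hiso⟩ := h
  have hM := Γ.N_div_n_pos 0
  obtain ⟨b, hb, rfl⟩ := Γ.exists_eq_rootSeries_of_mem_roots hs.1
  have hl : l ≤ Λ := by
    obtain ⟨s₁, hs₁, s₂, hs₂, hne⟩ := Γ.two_le_ncard_jetFiber_iff.1 h2
    obtain ⟨b₁, hb₁, rfl⟩ := Γ.exists_eq_rootSeries_of_mem_roots hs₁.1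
    obtain ⟨b₂, hb₂, rfl⟩ := Γ.exists_eq_rootSeries_of_mem_roots hs₂.1
    have := gcdChain_ne_one_of_trunc_rootSeries_eq hM hb₁ hb₂ (by rintro rfl; exact hne rfl)
      (hs₁.2.trans hs₂.2.symm)
    rw [N_div_n_zero, Nat.div_one] at this
    exact hlast l this
  have hΛl : Λ ≤ l := by
    by_contra! hlt
    have hg : gcdChain (Γ.n 0) (Γ.c 0) ((l + 1) / (Γ.N / Γ.n 0)) ≠ 1 := by
      rw [N_div_n_zero, Nat.div_one]
      intro h1
      have hdvd := gcdChain_dvd_gcdChain (n := Γ.n 0) (c := Γ.c 0) (show l + 1 ≤ Λ by omega)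
      rw [h1] at hdvd
      exact hΛ (Nat.eq_one_of_dvd_one hdvd)
    obtain ⟨b', hb', hne, htrunc⟩ := exists_rootSeries_ne_trunc_eq hM (Γ.primitive 0) hb hg
    exact hne (hiso _ ⟨Γ.root_mem_roots 0 hb', (trunc_eq_trunc_of_le (by omega) htrunc).trans hs.2⟩
      htrunc)
  obtain rfl : l = Λ := le_antisymm hl hΛl
  exact ⟨rfl, b, hb, hs.2⟩

lemma muD_le_muBranch (hsing : Γ.Singular) : Γ.muD ≤ Γ.muBranch 0 := by
  have hn : 2 ≤ Γ.n 0 := by simpa [Singular, mult] using hsing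
  obtain ⟨Λ, hΛ, hlast⟩ :=
    exists_last_gcdChain_ne_one hn (Γ.not_tangent 0 0 (Γ.n_pos 0)) (Γ.primitive 0)
  have hcard := ncard_image_trunc_rootSeries (c := Γ.c 0) (Γ.N_div_n_pos 0) Λ
  rw [N_div_n_zero, Nat.div_one, ← Γ.muBranch_eq_div hΛ hlast] at hcard
  rw [← hcard, ← Set.ncard_image_of_injective _ (Prod.mk_right_injective Λ)]
  refine Set.ncard_le_ncard (fun p hp => ?_) (Set.toFinite _)
  obtain ⟨hl, hσ⟩ := Γ.isDivisorialJet_level hΛ hlast hp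
  exact ⟨p.2, hσ, by rw [← hl]⟩

end CurveGermData

/-- For a germ of reduced singular curve
`Γ = γ¹ ∪ … ∪ γ^q` at `0 ∈ ℂ²` one has
`μ_D(Γ) ≥ μ_T(Γ) ≥ max(μ(γ¹), …, μ(γ^q))`; moreover, if `Γ` is irreducible
(`q = 1`) then `μ_T(Γ) = μ_D(Γ) = μ(Γ)`. -/
theorem stmt6 (q : ℕ) (Γ : CurveGermData q) (hsing : Γ.Singular) :
    Γ.muT ≤ Γ.muD ∧ (∀ j : Fin q, Γ.muBranch j ≤ Γ.muT) ∧
    (q = 1 → ∀ j : Fin q, Γ.muT = Γ.muBranch j ∧ Γ.muD = Γ.muBranch j) := by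
  refine ⟨Γ.muT_le_muD, Γ.muBranch_le_muT hsing, ?_⟩
  rintro rfl j
  obtain rfl := Subsingleton.elim j 0
  have := Γ.muBranch_le_muT hsing 0
  have := Γ.muT_le_muD
  have := Γ.muD_le_muBranch hsing
  omega

end PoincareRed
end

section
/- Let p ≥ 3 be an odd integer, Γ the curve y² = x^p with Puiseux parametrization θ(t) = (t², t^p), 𝓕 the foliation defined by the vector field X = 2x ∂/∂x + p y ∂/∂y (which has first integral y²/x^p), and 𝓗 the hamiltonian foliation of f = y² − x^p, defined by Y = 2y ∂/∂x + p x^{p−1} ∂/∂y. Then dθ(t)(t ∂/∂t) = X(θ(t)) and dθ(t)(t^{p−1} ∂/∂t) = Y(θ(t)); consequently θ*X = t ∂/∂t and θ*Y = t^{p−1} ∂/∂t, so Z₀(𝓕, Γ) = 1 and Z₀(𝓗, Γ) = p − 1. In particular the ratio Z₀(𝓕, Γ)/Z₀(𝓗, Γ) = 1/(p−1) is not bounded from below by a positive constant independent of p, even though ν₀(Γ)/μ(Γ) = 2 for all such p. -/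
/-!
With `θ'(t) = (2t, p t^(p-1))` both tangency identities are monomial identities in `t`. The first
coordinate `2t` of `θ'(t)` vanishes only at `0`, so off the origin `θ` is an immersion and the
pulled-back fields are determined. The `n`-th derivative of `t ↦ t^m` at `0` is `m!` for `n = m`
and `0` otherwise, so the vanishing order of `t^m` is `m`.
-/

/-- The vanishing order at `0 ∈ ℂ` of a function `g : ℂ → ℂ`:
the least `n` such that the `n`-th derivative of `g` at `0` is nonzero. -/
noncomputable def vanishingOrderAtZero (g : ℂ → ℂ) : ℕ :=
  sInf {n : ℕ | iteratedDeriv n g 0 ≠ 0}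

theorem vanishingOrderAtZero_pow (m : ℕ) : vanishingOrderAtZero (· ^ m) = m := by
  have hsupport : {n : ℕ | iteratedDeriv n (· ^ m) (0 : ℂ) ≠ 0} = {m} := by
    ext n
    change iteratedDeriv n _ 0 ≠ 0 ↔ n = m
    rw [iteratedDeriv_fun_pow_zero]
    split_ifs with h <;> simp [h, m.factorial_ne_zero]
  rw [vanishingOrderAtZero, hsupport, csInf_singleton]

theorem deriv_pow_prod_pow {𝕜 : Type*} [NontriviallyNormedField 𝕜] (a b : ℕ) (t : 𝕜) :
    deriv (fun s => (s ^ a, s ^ b)) t = (a * t ^ (a - 1), b * t ^ (b - 1)) :=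
  ((hasDerivAt_pow a t).prodMk (hasDerivAt_pow b t)).deriv

section Tangency

variable {R : Type*} [CommSemiring R]

theorem smul_two_mul_prod_natCast_mul_pow_pred (p : ℕ) (t : R) :
    t • (2 * t, (p : R) * t ^ (p - 1)) = (2 * t ^ 2, (p : R) * t ^ p) := by
  cases p with
  | zero => ext <;> simp only [Prod.smul_fst, Prod.smul_snd, smul_eq_mul, Nat.cast_zero] <;> ring
  | succ k =>
    ext <;> simp only [Prod.smul_fst, Prod.smul_snd, smul_eq_mul, Nat.add_sub_cancel] <;> ring

theorem pow_pred_smul_two_mul_prod_natCast_mul_pow_pred {p : ℕ} (hp : 1 ≤ p) (t : R) :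
    t ^ (p - 1) • (2 * t, (p : R) * t ^ (p - 1)) =
      (2 * t ^ p, (p : R) * (t ^ 2) ^ (p - 1)) := by
  obtain ⟨k, rfl⟩ := Nat.exists_eq_add_of_le' hp
  ext <;> simp only [Prod.smul_fst, Prod.smul_snd, smul_eq_mul, Nat.add_sub_cancel] <;> ring

end Tangency

theorem eq_of_smul_deriv_eq_of_deriv_ne_zero {𝕜 E : Type*} [NontriviallyNormedField 𝕜]
    [NormedAddCommGroup E] [NormedSpace 𝕜 E] {θ : 𝕜 → E} {V : E → E} {g h : 𝕜 → 𝕜} {t : 𝕜}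
    (hg : g t • deriv θ t = V (θ t)) (hh : h t • deriv θ t = V (θ t)) (ht : deriv θ t ≠ 0) :
    g t = h t :=
  smul_left_injective 𝕜 ht (hg.trans hh.symm)

theorem exists_odd_three_le_one_div_sub_one_lt {c : ℝ} (hc : 0 < c) :
    ∃ q : ℕ, Odd q ∧ 3 ≤ q ∧ 1 / ((q : ℝ) - 1) < c := by
  obtain ⟨n, hn⟩ := exists_nat_gt (1 / c)
  refine ⟨2 * n + 3, odd_two_mul_add_one (n + 1), by omega, ?_⟩
  have hn0 : (0 : ℝ) ≤ n := n.cast_nonneg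
  rw [div_lt_iff₀ (by push_cast; linarith), ← div_lt_iff₀' hc]
  push_cast
  linarith

theorem stmt15_general (p : ℕ) (hp3 : 3 ≤ p)
    (θ : ℂ → ℂ × ℂ) (hθ : ∀ t, θ t = (t ^ 2, t ^ p))
    (X : ℂ × ℂ → ℂ × ℂ) (hX : ∀ z : ℂ × ℂ, X z = (2 * z.1, (p : ℂ) * z.2))
    (Y : ℂ × ℂ → ℂ × ℂ) (hY : ∀ z : ℂ × ℂ, Y z = (2 * z.2, (p : ℂ) * z.1 ^ (p - 1))) :
    -- the two tangency identities `dθ(t)(t ∂/∂t) = X(θ(t))` and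
    -- `dθ(t)(t^(p−1) ∂/∂t) = Y(θ(t))`
    (∀ t : ℂ, t • deriv θ t = X (θ t)) ∧
    (∀ t : ℂ, t ^ (p - 1) • deriv θ t = Y (θ t)) ∧
    -- consequently `θ*X = t ∂/∂t` and `θ*Y = t^(p−1) ∂/∂t`
    (∀ g : ℂ → ℂ, (∀ t, g t • deriv θ t = X (θ t)) → ∀ t : ℂ, t ≠ 0 → g t = t) ∧
    (∀ g : ℂ → ℂ, (∀ t, g t • deriv θ t = Y (θ t)) → ∀ t : ℂ, t ≠ 0 → g t = t ^ (p - 1)) ∧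
    -- so `Z₀(𝓕, Γ) = 1` and `Z₀(𝓗, Γ) = p − 1`
    vanishingOrderAtZero (fun t => t) = 1 ∧
    vanishingOrderAtZero (fun t => t ^ (p - 1)) = p - 1 ∧
    -- the ratio `Z₀(𝓕,Γ)/Z₀(𝓗,Γ) = 1/(p−1)` is not bounded from below by a
    -- positive constant independent of `p`
    (∀ c : ℝ, 0 < c → ∃ q : ℕ, Odd q ∧ 3 ≤ q ∧ (1 : ℝ) / ((q : ℝ) - 1) < c) ∧
    -- even though `ν₀(Γ) = 2` and `μ(Γ) = 1`, so `ν₀(Γ)/μ(Γ) = 2`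
    ((2 : ℝ) / (1 : ℝ) = 2) := by
  have hp1 : 1 ≤ p := by omega
  have hderiv t : deriv θ t = (2 * t, (p : ℂ) * t ^ (p - 1)) := by
    rw [funext hθ, deriv_pow_prod_pow]
    norm_num
  have hX_tangent t : t • deriv θ t = X (θ t) := by
    rw [hderiv, hX, hθ, smul_two_mul_prod_natCast_mul_pow_pred p]
  have hY_tangent t : t ^ (p - 1) • deriv θ t = Y (θ t) := by
    rw [hderiv, hY, hθ, pow_pred_smul_two_mul_prod_natCast_mul_pow_pred hp1]
  have hderiv_ne t (ht : t ≠ 0) : deriv θ t ≠ 0 := by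
    rw [hderiv, Ne, Prod.ext_iff]
    simp [ht]
  refine ⟨hX_tangent, hY_tangent, ?_, ?_, by simpa using vanishingOrderAtZero_pow 1,
    vanishingOrderAtZero_pow (p - 1), fun c hc => exists_odd_three_le_one_div_sub_one_lt hc,
    div_one 2⟩
  · exact fun g hg t ht => eq_of_smul_deriv_eq_of_deriv_ne_zero (h := fun s => s)
      (hg t) (hX_tangent t) (hderiv_ne t ht)
  · exact fun g hg t ht => eq_of_smul_deriv_eq_of_deriv_ne_zero (h := (· ^ (p - 1)))
      (hg t) (hY_tangent t) (hderiv_ne t ht)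

theorem stmt15 (p : ℕ) (hp : Odd p) (hp3 : 3 ≤ p)
    (θ : ℂ → ℂ × ℂ) (hθ : ∀ t, θ t = (t ^ 2, t ^ p))
    (X : ℂ × ℂ → ℂ × ℂ) (hX : ∀ z : ℂ × ℂ, X z = (2 * z.1, (p : ℂ) * z.2))
    (Y : ℂ × ℂ → ℂ × ℂ) (hY : ∀ z : ℂ × ℂ, Y z = (2 * z.2, (p : ℂ) * z.1 ^ (p - 1))) :
    -- the two tangency identities `dθ(t)(t ∂/∂t) = X(θ(t))` and
    -- `dθ(t)(t^(p−1) ∂/∂t) = Y(θ(t))`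
    (∀ t : ℂ, t • deriv θ t = X (θ t)) ∧
    (∀ t : ℂ, t ^ (p - 1) • deriv θ t = Y (θ t)) ∧
    -- consequently `θ*X = t ∂/∂t` and `θ*Y = t^(p−1) ∂/∂t`
    (∀ g : ℂ → ℂ, (∀ t, g t • deriv θ t = X (θ t)) → ∀ t : ℂ, t ≠ 0 → g t = t) ∧
    (∀ g : ℂ → ℂ, (∀ t, g t • deriv θ t = Y (θ t)) → ∀ t : ℂ, t ≠ 0 → g t = t ^ (p - 1)) ∧
    -- so `Z₀(𝓕, Γ) = 1` and `Z₀(𝓗, Γ) = p − 1`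
    vanishingOrderAtZero (fun t => t) = 1 ∧
    vanishingOrderAtZero (fun t => t ^ (p - 1)) = p - 1 ∧
    -- the ratio `Z₀(𝓕,Γ)/Z₀(𝓗,Γ) = 1/(p−1)` is not bounded from below by a
    -- positive constant independent of `p`
    (∀ c : ℝ, 0 < c → ∃ q : ℕ, Odd q ∧ 3 ≤ q ∧ (1 : ℝ) / ((q : ℝ) - 1) < c) ∧
    -- even though `ν₀(Γ) = 2` and `μ(Γ) = 1`, so `ν₀(Γ)/μ(Γ) = 2`
    ((2 : ℝ) / (1 : ℝ) = 2) :=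
  stmt15_general p hp3 θ hθ X hX Y hY
end
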